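/- Under Assumptions 1–4 there exists a constant C₈ such that, for all N, E[√n · sup_{(s,t)∈[0,T]²} |μ̂_N(t) − μ_N(t) − μ̂_N(s) + μ_N(s)|] ≤ C₈; consequently √n · E[sup_{t∈[0,T]} |μ̂_N(t) − μ_N(t)|] is bounded uniformly in N. -/

import Mathlib

open Finset MeasureTheory ProbabilityTheory Filter Topology

noncomputable section

/-- Expectation of `f` under a sampling design `p` on the population `{0, …, N-1}`. -/
def dExp (N : ℕ) (p : Finset ℕ → ℝ) (f : Finset ℕ → ℝ) : ℝ :=
  ∑ s ∈ (Finset.range N).powerset, p s * f s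

/-- Variance of `f` under the sampling design `p`. -/
def dVar (N : ℕ) (p : Finset ℕ → ℝ) (f : Finset ℕ → ℝ) : ℝ :=
  dExp N p (fun s => f s ^ 2) - dExp N p f ^ 2

/-- `p` is a fixed-size-`n` sampling design on the population `{0, …, N-1}`. -/
structure IsDesign (N n : ℕ) (p : Finset ℕ → ℝ) : Prop where
  nonneg : ∀ s, 0 ≤ p s
  sum_one : ∑ s ∈ (Finset.range N).powerset, p s = 1
  supp : ∀ s, p s ≠ 0 → s ⊆ Finset.range N ∧ s.card = n

/-- First-order inclusion probability `π_k`. -/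
def pi1 (N : ℕ) (p : Finset ℕ → ℝ) (k : ℕ) : ℝ :=
  dExp N p fun s => if k ∈ s then 1 else 0

/-- Second-order inclusion probability `π_{kl}` (it equals `π_k` on the diagonal). -/
def pi2 (N : ℕ) (p : Finset ℕ → ℝ) (k l : ℕ) : ℝ :=
  dExp N p fun s => if k ∈ s ∧ l ∈ s then 1 else 0

/-- `Δ_{kl} = π_{kl} - π_k π_l`; on the diagonal it equals `π_k (1 - π_k)`. -/
def Delta (N : ℕ) (p : Finset ℕ → ℝ) (k l : ℕ) : ℝ :=
  pi2 N p k l - pi1 N p k * pi1 N p l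

/-- Sample membership indicator `I_k`. -/
def ind (k : ℕ) (s : Finset ℕ) : ℝ := if k ∈ s then 1 else 0

/-- Population mean trajectory `μ_N`. -/
def popMean (N : ℕ) (Y : ℕ → ℝ → ℝ) (t : ℝ) : ℝ :=
  (N : ℝ)⁻¹ * ∑ k ∈ Finset.range N, Y k t

/-- Horvitz–Thompson estimator of the mean curve computed from the sample `s`. -/
def htMean (N : ℕ) (p : Finset ℕ → ℝ) (Y : ℕ → ℝ → ℝ) (s : Finset ℕ) (t : ℝ) : ℝ :=
  (N : ℝ)⁻¹ * ∑ k ∈ s, Y k t / pi1 N p k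

/-- Covariance function `γ_N(u,v)` of the Horvitz–Thompson estimator under the design. -/
def htCov (N : ℕ) (p : Finset ℕ → ℝ) (Y : ℕ → ℝ → ℝ) (u v : ℝ) : ℝ :=
  dExp N p (fun s => htMean N p Y s u * htMean N p Y s v) -
    dExp N p (fun s => htMean N p Y s u) * dExp N p (fun s => htMean N p Y s v)

/-- Horvitz–Thompson covariance estimator `γ̂(u,v)`. -/
def htCovEst (N : ℕ) (p : Finset ℕ → ℝ) (Y : ℕ → ℝ → ℝ) (s : Finset ℕ) (u v : ℝ) : ℝ :=
  ((N : ℝ) ^ 2)⁻¹ * ∑ k ∈ s, ∑ l ∈ s,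
    Y k u / pi1 N p k * (Y l v / pi1 N p l) * (Delta N p k l / pi2 N p k l)

/-- Mesh (largest gap) of a discretization grid `pts` with `d` subintervals. -/
def meshR (d : ℕ) (hd : 0 < d) (pts : Fin (d + 1) → ℝ) : ℝ :=
  Finset.univ.sup' (⟨⟨0, hd⟩, Finset.mem_univ _⟩ : (Finset.univ : Finset (Fin d)).Nonempty)
    fun i : Fin d => |pts i.succ - pts i.castSucc|

/-! Write the centred estimator as `Z(t) = N⁻¹ ∑ₖ (Y_k(t) / π_k) (I_k - π_k)`. Assumption 2
bounds the variance of such a linear statistic, so that `n E (Z(u) - Z(v))² ≲ |u - v|^(2β)`,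
while `|I_k - π_k| ≤ 1` gives the pathwise Hölder bound `|Z(u) - Z(v)| ≲ |u - v|^β`. Chain along
the dyadic grid of `[0, T]` down to level `n`: the maximum over the `2^m + 1` links of level `m`
has `L²` norm `≲ n^(-1/2) 2^(m/2) 2^(-mβ)`, summable in `m` because `β > 1/2`; below level `n`
the pathwise bound costs `(T 2^(-n))^β ≤ n^(-1/2) T^β`. -/

section DesignExpectation

variable {N n : ℕ} {p : Finset ℕ → ℝ}

lemma dExp_congr {f g : Finset ℕ → ℝ} (h : ∀ s ∈ (range N).powerset, f s = g s) :
    dExp N p f = dExp N p g :=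
  sum_congr rfl fun s hs => by rw [h s hs]

lemma dExp_add (f g : Finset ℕ → ℝ) :
    dExp N p (fun s => f s + g s) = dExp N p f + dExp N p g := by
  simp only [dExp, mul_add, sum_add_distrib]

lemma dExp_const_mul (c : ℝ) (f : Finset ℕ → ℝ) :
    dExp N p (fun s => c * f s) = c * dExp N p f := by
  simp only [dExp, mul_sum, mul_left_comm]

lemma dExp_sum {ι : Type*} (A : Finset ι) (F : ι → Finset ℕ → ℝ) :
    dExp N p (fun s => ∑ i ∈ A, F i s) = ∑ i ∈ A, dExp N p (F i) := by
  simp only [dExp, mul_sum]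
  exact sum_comm

lemma delta_self_le_one (k : ℕ) : Delta N p k k ≤ 1 := by
  have hpi2 : pi2 N p k k = pi1 N p k := dExp_congr fun s _ => by simp only [and_self]
  rw [Delta, hpi2]
  nlinarith [sq_nonneg (pi1 N p k - 1 / 2)]

namespace IsDesign

lemma dExp_const (hd : IsDesign N n p) (c : ℝ) : dExp N p (fun _ => c) = c := by
  simp [dExp, ← sum_mul, hd.sum_one]

lemma dExp_mono (hd : IsDesign N n p) {f g : Finset ℕ → ℝ}
    (h : ∀ s ∈ (range N).powerset, f s ≤ g s) : dExp N p f ≤ dExp N p g :=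
  sum_le_sum fun s hs => mul_le_mul_of_nonneg_left (h s hs) (hd.nonneg s)

lemma dExp_nonneg (hd : IsDesign N n p) {f : Finset ℕ → ℝ}
    (h : ∀ s ∈ (range N).powerset, 0 ≤ f s) : 0 ≤ dExp N p f :=
  hd.dExp_const 0 ▸ hd.dExp_mono h

lemma sq_dExp_le (hd : IsDesign N n p) (f : Finset ℕ → ℝ) :
    dExp N p f ^ 2 ≤ dExp N p (fun s => f s ^ 2) :=
  (even_two.convexOn_pow (𝕜 := ℝ)).map_sum_le (fun s _ => hd.nonneg s) hd.sum_one
    (fun _ _ => Set.mem_univ _)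

lemma sqrt_mul_dExp_abs_le (hd : IsDesign N n p) {f : Finset ℕ → ℝ} {c B : ℝ} (hc : 0 ≤ c)
    (h : c * dExp N p (fun s => f s ^ 2) ≤ B) :
    √c * dExp N p (fun s => |f s|) ≤ √B := by
  have habs : 0 ≤ dExp N p (fun s => |f s|) := hd.dExp_nonneg fun s _ => abs_nonneg _
  calc √c * dExp N p (fun s => |f s|) = √(c * dExp N p (fun s => |f s|) ^ 2) := by
        rw [Real.sqrt_mul hc, Real.sqrt_sq habs]
    _ ≤ √(c * dExp N p (fun s => f s ^ 2)) := by
        gcongr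
        simpa only [sq_abs] using hd.sq_dExp_le fun s => |f s|
    _ ≤ √B := Real.sqrt_le_sqrt h

lemma card_le (hd : IsDesign N n p) : n ≤ N := by
  obtain ⟨s, hs, hps⟩ := exists_ne_zero_of_sum_ne_zero (hd.sum_one ▸ one_ne_zero)
  obtain ⟨hsub, hcard⟩ := hd.supp s hps
  simpa [hcard] using card_le_card hsub

lemma pi1_mem_Icc (hd : IsDesign N n p) (k : ℕ) : pi1 N p k ∈ Set.Icc 0 1 :=
  ⟨hd.dExp_nonneg fun s _ => by positivity,
    hd.dExp_const 1 ▸ hd.dExp_mono fun s _ => by split_ifs <;> norm_num⟩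

lemma abs_ind_sub_pi1_le (hd : IsDesign N n p) (k : ℕ) (s : Finset ℕ) :
    |ind k s - pi1 N p k| ≤ 1 := by
  obtain ⟨h0, h1⟩ := hd.pi1_mem_Icc k
  rw [abs_le]
  unfold ind
  split_ifs <;> constructor <;> linarith

lemma dExp_centered_ind_mul (hd : IsDesign N n p) (k l : ℕ) :
    dExp N p (fun s => (ind k s - pi1 N p k) * (ind l s - pi1 N p l)) = Delta N p k l := by
  have hprod : dExp N p (fun s => ind k s * ind l s) = pi2 N p k l :=
    dExp_congr fun s _ => by unfold ind; split_ifs <;> simp_all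
  have expand : ∀ s, (ind k s - pi1 N p k) * (ind l s - pi1 N p l) =
      ind k s * ind l s + (-pi1 N p l * ind k s + (-pi1 N p k * ind l s
        + pi1 N p k * pi1 N p l)) := fun s => by ring
  have hk : dExp N p (ind k) = pi1 N p k := rfl
  have hl : dExp N p (ind l) = pi1 N p l := rfl
  simp only [expand, dExp_add, dExp_const_mul, hd.dExp_const, hprod, hk, hl, Delta]
  ring

/-- The diagonal of `Δ` is at most `1 ≤ N / n`; the off-diagonal part is handled by
Cauchy–Schwarz, `(∑ |c_k|)² ≤ N ∑ c_k²`. -/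
lemma mul_dExp_sq_sum_le (hd : IsDesign N n p) {C₁ : ℝ} (hC₁ : 0 ≤ C₁)
    (hΔ : ∀ k ∈ range N, ∀ l ∈ range N, k ≠ l → (n : ℝ) * |Delta N p k l| ≤ C₁)
    (c : ℕ → ℝ) :
    (n : ℝ) * dExp N p (fun s => (∑ k ∈ range N, c k * (ind k s - pi1 N p k)) ^ 2)
      ≤ (1 + C₁) * (N * ∑ k ∈ range N, c k ^ 2) := by
  have hvar : dExp N p (fun s => (∑ k ∈ range N, c k * (ind k s - pi1 N p k)) ^ 2)
      = ∑ k ∈ range N, ∑ l ∈ range N, c k * c l * Delta N p k l := by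
    simp_rw [sq, sum_mul_sum, dExp_sum, ← hd.dExp_centered_ind_mul, ← dExp_const_mul]
    exact sum_congr rfl fun k _ => sum_congr rfl fun l _ => dExp_congr fun s _ => by ring
  have hnN : (n : ℝ) ≤ N := by exact_mod_cast hd.card_le
  have hterm : ∀ k ∈ range N, ∀ l ∈ range N, (n : ℝ) * (c k * c l * Delta N p k l)
      ≤ (if k = l then (N : ℝ) * c k ^ 2 else 0) + C₁ * (|c k| * |c l|) := by
    intro k hk l hl
    by_cases hkl : k = l
    · subst hkl
      have h1 : (n : ℝ) * Delta N p k k ≤ N := by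
        nlinarith [delta_self_le_one (N := N) (p := p) k, Nat.cast_nonneg (α := ℝ) n]
      simp only [if_true]
      nlinarith [mul_le_mul_of_nonneg_right h1 (sq_nonneg (c k)),
        mul_nonneg hC₁ (mul_nonneg (abs_nonneg (c k)) (abs_nonneg (c k)))]
    · calc (n : ℝ) * (c k * c l * Delta N p k l)
          ≤ |c k| * |c l| * ((n : ℝ) * |Delta N p k l|) := by
            refine (le_abs_self _).trans_eq ?_
            rw [abs_mul, abs_mul, abs_mul, Nat.abs_cast]
            ring
        _ ≤ |c k| * |c l| * C₁ := by gcongr; exact hΔ k hk l hl hkl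
        _ = _ := by simp [hkl, mul_comm]
  have hcs : (∑ k ∈ range N, |c k|) ^ 2 ≤ N * ∑ k ∈ range N, c k ^ 2 := by
    simpa only [sq_abs, card_range] using sq_sum_le_card_mul_sum_sq
      (s := range N) (f := fun k => |c k|)
  calc (n : ℝ) * dExp N p _
        = ∑ k ∈ range N, ∑ l ∈ range N, (n : ℝ) * (c k * c l * Delta N p k l) := by
        rw [hvar, mul_sum]; simp only [mul_sum]
    _ ≤ ∑ k ∈ range N, ∑ l ∈ range N,
          ((if k = l then (N : ℝ) * c k ^ 2 else 0) + C₁ * (|c k| * |c l|)) :=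
        sum_le_sum fun k hk => sum_le_sum fun l hl => hterm k hk l hl
    _ = N * ∑ k ∈ range N, c k ^ 2 + C₁ * (∑ k ∈ range N, |c k|) ^ 2 := by
        simp only [sum_add_distrib]
        rw [mul_sum, sq, sum_mul_sum, mul_sum]
        congr 1
        · exact sum_congr rfl fun k hk => by rw [sum_ite_eq, if_pos hk]
        · simp only [mul_sum]
    _ ≤ (1 + C₁) * (N * ∑ k ∈ range N, c k ^ 2) := by nlinarith

end IsDesign

end DesignExpectation

def htError (N : ℕ) (p : Finset ℕ → ℝ) (z : ℕ → ℝ) (s : Finset ℕ) : ℝ :=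
  (N : ℝ)⁻¹ * ∑ k ∈ range N, z k / pi1 N p k * (ind k s - pi1 N p k)

section HorvitzThompson

variable {N n : ℕ} {p : Finset ℕ → ℝ}

lemma htMean_sub_popMean (hπ : ∀ k ∈ range N, pi1 N p k ≠ 0) (Y : ℕ → ℝ → ℝ)
    {s : Finset ℕ} (hs : s ⊆ range N) (t : ℝ) :
    htMean N p Y s t - popMean N Y t = htError N p (fun k => Y k t) s := by
  have hsample :
      ∑ k ∈ s, Y k t / pi1 N p k = ∑ k ∈ range N, Y k t / pi1 N p k * ind k s := by
    simp only [ind, mul_ite, mul_one, mul_zero]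
    rw [sum_ite_mem, inter_eq_right.mpr hs]
  have hpop : ∑ k ∈ range N, Y k t = ∑ k ∈ range N, Y k t / pi1 N p k * pi1 N p k :=
    sum_congr rfl fun k hk => (div_mul_cancel₀ _ (hπ k hk)).symm
  rw [htMean, popMean, htError, ← mul_sub, hsample, hpop, ← sum_sub_distrib]
  simp only [mul_sub]

lemma htError_sub (z w : ℕ → ℝ) (s : Finset ℕ) :
    htError N p z s - htError N p w s = htError N p (fun k => z k - w k) s := by
  simp only [htError, ← mul_sub, ← sum_sub_distrib, sub_div, sub_mul]

lemma mean_abs_le_sqrt_mean_sq (z : ℕ → ℝ) :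
    (N : ℝ)⁻¹ * ∑ k ∈ range N, |z k| ≤ √((N : ℝ)⁻¹ * ∑ k ∈ range N, z k ^ 2) := by
  refine Real.le_sqrt_of_sq_le ?_
  have hcs : (∑ k ∈ range N, |z k|) ^ 2 ≤ N * ∑ k ∈ range N, z k ^ 2 := by
    simpa only [sq_abs, card_range] using sq_sum_le_card_mul_sum_sq
      (s := range N) (f := fun k => |z k|)
  calc ((N : ℝ)⁻¹ * ∑ k ∈ range N, |z k|) ^ 2
        = (N : ℝ)⁻¹ ^ 2 * (∑ k ∈ range N, |z k|) ^ 2 := by ring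
    _ ≤ (N : ℝ)⁻¹ ^ 2 * (N * ∑ k ∈ range N, z k ^ 2) := by gcongr
    _ = (N : ℝ)⁻¹ * ∑ k ∈ range N, z k ^ 2 := by
        rcases Nat.eq_zero_or_pos N with rfl | hN
        · simp
        · field_simp

namespace IsDesign

variable {lam : ℝ}

lemma abs_htError_le (hd : IsDesign N n p) (hlam : 0 < lam)
    (hπ : ∀ k ∈ range N, lam ≤ pi1 N p k) (z : ℕ → ℝ) (s : Finset ℕ) :
    |htError N p z s| ≤ lam⁻¹ * √((N : ℝ)⁻¹ * ∑ k ∈ range N, z k ^ 2) := by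
  have hterm :
      ∀ k ∈ range N, |z k / pi1 N p k * (ind k s - pi1 N p k)| ≤ lam⁻¹ * |z k| := by
    intro k hk
    have hπk : 0 < pi1 N p k := hlam.trans_le (hπ k hk)
    rw [abs_mul, abs_div, abs_of_pos hπk, div_eq_inv_mul]
    calc (pi1 N p k)⁻¹ * |z k| * |ind k s - pi1 N p k| ≤ (pi1 N p k)⁻¹ * |z k| * 1 := by
          gcongr; exact hd.abs_ind_sub_pi1_le k s
      _ ≤ lam⁻¹ * |z k| := by rw [mul_one]; gcongr; exact hπ k hk
  calc |htError N p z s| ≤ (N : ℝ)⁻¹ * ∑ k ∈ range N, lam⁻¹ * |z k| := by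
        rw [htError, abs_mul, abs_inv, Nat.abs_cast]
        gcongr
        exact (abs_sum_le_sum_abs _ _).trans (sum_le_sum hterm)
    _ = lam⁻¹ * ((N : ℝ)⁻¹ * ∑ k ∈ range N, |z k|) := by rw [← mul_sum]; ring
    _ ≤ lam⁻¹ * √((N : ℝ)⁻¹ * ∑ k ∈ range N, z k ^ 2) := by
        gcongr; exact mean_abs_le_sqrt_mean_sq z

lemma mul_dExp_htError_sq_le (hd : IsDesign N n p) (hlam : 0 < lam)
    (hπ : ∀ k ∈ range N, lam ≤ pi1 N p k) {C₁ : ℝ} (hC₁ : 0 ≤ C₁)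
    (hΔ : ∀ k ∈ range N, ∀ l ∈ range N, k ≠ l → (n : ℝ) * |Delta N p k l| ≤ C₁)
    (z : ℕ → ℝ) :
    (n : ℝ) * dExp N p (fun s => htError N p z s ^ 2)
      ≤ (1 + C₁) / lam ^ 2 * ((N : ℝ)⁻¹ * ∑ k ∈ range N, z k ^ 2) := by
  have hc :
      ∑ k ∈ range N, (z k / pi1 N p k) ^ 2 ≤ (∑ k ∈ range N, z k ^ 2) / lam ^ 2 := by
    rw [sum_div]
    refine sum_le_sum fun k hk => ?_
    rw [div_pow]
    gcongr
    exact hπ k hk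
  calc (n : ℝ) * dExp N p (fun s => htError N p z s ^ 2)
      = (N : ℝ)⁻¹ ^ 2 * ((n : ℝ) * dExp N p (fun s =>
          (∑ k ∈ range N, z k / pi1 N p k * (ind k s - pi1 N p k)) ^ 2)) := by
        simp only [htError, mul_pow, dExp_const_mul]
        ring
    _ ≤ (N : ℝ)⁻¹ ^ 2 * ((1 + C₁) * (N * ((∑ k ∈ range N, z k ^ 2) / lam ^ 2))) := by
        refine mul_le_mul_of_nonneg_left ((hd.mul_dExp_sq_sum_le hC₁ hΔ _).trans ?_)
          (by positivity)
        exact mul_le_mul_of_nonneg_left (mul_le_mul_of_nonneg_left hc N.cast_nonneg)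
          (by linarith)
    _ = (1 + C₁) / lam ^ 2 * ((N : ℝ)⁻¹ * ∑ k ∈ range N, z k ^ 2) := by
        rcases Nat.eq_zero_or_pos N with rfl | hN
        · simp
        · field_simp

end IsDesign

end HorvitzThompson

def gridPt (T : ℝ) (m j : ℕ) : ℝ := j * T / 2 ^ m

def gridIdx (T : ℝ) (m : ℕ) (t : ℝ) : ℕ := ⌊t * 2 ^ m / T⌋₊

/-- The parent of the level-`(m + 1)` dyadic point `j` is the level-`m` point `j / 2`. -/
def dyadicLinkMax (T : ℝ) (f : ℝ → ℝ) (m : ℕ) : ℝ :=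
  (range (2 ^ (m + 1) + 1)).sup' nonempty_range_add_one
    fun j => |f (gridPt T (m + 1) j) - f (gridPt T m (j / 2))|

section DyadicGrid

variable {T t : ℝ} {m j : ℕ}

lemma gridIdx_le (hT : 0 < T) (ht : t ∈ Set.Icc 0 T) : gridIdx T m t ≤ 2 ^ m := by
  refine Nat.floor_le_of_le ?_
  rw [div_le_iff₀ hT, Nat.cast_pow, Nat.cast_ofNat]
  nlinarith [ht.2, pow_pos (two_pos (α := ℝ)) m]

lemma gridPt_mem (hT : 0 < T) (hj : j ≤ 2 ^ m) : gridPt T m j ∈ Set.Icc 0 T := by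
  have hj' : (j : ℝ) ≤ 2 ^ m := by exact_mod_cast hj
  refine ⟨by unfold gridPt; positivity, ?_⟩
  rw [gridPt, div_le_iff₀ (by positivity)]
  nlinarith

lemma abs_sub_gridPt_gridIdx_le (hT : 0 < T) (ht : t ∈ Set.Icc 0 T) :
    |t - gridPt T m (gridIdx T m t)| ≤ T / 2 ^ m := by
  have hlo : (gridIdx T m t : ℝ) ≤ t * 2 ^ m / T := Nat.floor_le (by have := ht.1; positivity)
  have hhi : t * 2 ^ m / T < gridIdx T m t + 1 := Nat.lt_floor_add_one _
  rw [le_div_iff₀ hT] at hlo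
  rw [div_lt_iff₀ hT] at hhi
  have h2m : (0 : ℝ) < 2 ^ m := by positivity
  have e : t - gridPt T m (gridIdx T m t) = (t * 2 ^ m - gridIdx T m t * T) / 2 ^ m := by
    rw [gridPt]; field_simp
  rw [e, abs_div, abs_of_pos h2m, div_le_div_iff_of_pos_right h2m, abs_le]
  constructor <;> nlinarith

lemma gridIdx_eq_gridIdx_succ_div_two (T t : ℝ) (m : ℕ) :
    gridIdx T m t = gridIdx T (m + 1) t / 2 := by
  rw [gridIdx, gridIdx, ← Nat.floor_div_natCast]
  congr 1
  push_cast
  ring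

lemma abs_gridPt_succ_sub_gridPt_div_two_le (hT : 0 < T) (m j : ℕ) :
    |gridPt T (m + 1) j - gridPt T m (j / 2)| ≤ T / 2 ^ (m + 1) := by
  have hj : (j : ℝ) = 2 * (j / 2 : ℕ) + (j % 2 : ℕ) := by
    exact_mod_cast (Nat.div_add_mod j 2).symm
  have hmod : ((j % 2 : ℕ) : ℝ) ≤ 1 := by
    exact_mod_cast Nat.le_of_lt_succ (Nat.mod_lt j two_pos)
  have hdiff : gridPt T (m + 1) j - gridPt T m (j / 2) = (j % 2 : ℕ) * T / 2 ^ (m + 1) := by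
    rw [gridPt, gridPt, hj]
    ring
  rw [hdiff, abs_of_nonneg (by positivity)]
  gcongr
  nlinarith

lemma gridPt_zero_gridIdx_eq (hT : 0 < T) (ht : t ∈ Set.Icc 0 T) :
    gridPt T 0 (gridIdx T 0 t) = 0 ∨ gridPt T 0 (gridIdx T 0 t) = T := by
  have h := gridIdx_le (m := 0) hT ht
  interval_cases gridIdx T 0 t <;> simp [gridPt]

/-- The level-`0` dyadic points are `0` and `T`, whence the last term. -/
lemma abs_sub_le_dyadic_chain (hT : 0 < T) (f : ℝ → ℝ) (ht : t ∈ Set.Icc 0 T) (M : ℕ) :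
    |f t - f 0| ≤ |f t - f (gridPt T M (gridIdx T M t))|
      + ∑ m ∈ range M, dyadicLinkMax T f m + |f T - f 0| := by
  set g : ℕ → ℝ := fun m => gridPt T m (gridIdx T m t)
  have hlink : ∀ m, |f (g (m + 1)) - f (g m)| ≤ dyadicLinkMax T f m := fun m => by
    simp only [g, gridIdx_eq_gridIdx_succ_div_two T t m]
    exact le_sup' (fun j => |f (gridPt T (m + 1) j) - f (gridPt T m (j / 2))|)
      (mem_range_succ_iff.mpr (gridIdx_le hT ht))
  have hchain : |f (g M) - f (g 0)| ≤ ∑ m ∈ range M, dyadicLinkMax T f m := by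
    rw [← sum_range_sub (fun m => f (g m))]
    exact (abs_sum_le_sum_abs _ _).trans (sum_le_sum fun m _ => hlink m)
  have hroot : |f (g 0) - f 0| ≤ |f T - f 0| := by
    rcases gridPt_zero_gridIdx_eq hT ht with h | h <;> simp [g, h]
  linarith [abs_sub_le (f t) (f (g M)) (f 0), abs_sub_le (f (g M)) (f (g 0)) (f 0)]

end DyadicGrid

section ChainingScales

variable {T β : ℝ}

lemma sqrt_two_lt_two_rpow (hβ : 1 / 2 < β) : √2 < (2 : ℝ) ^ β := by
  rw [Real.sqrt_eq_rpow]
  exact Real.rpow_lt_rpow_of_exponent_lt one_lt_two hβ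

lemma sqrt_rpow_two_mul {x : ℝ} (hx : 0 ≤ x) (β : ℝ) : √(x ^ (2 * β)) = x ^ β := by
  rw [mul_comm, Real.rpow_mul hx, Real.rpow_two, Real.sqrt_sq (Real.rpow_nonneg hx β)]

lemma rpow_div_two_pow (hT : 0 ≤ T) (β : ℝ) (k : ℕ) :
    (T / 2 ^ k) ^ β = T ^ β / ((2 : ℝ) ^ β) ^ k := by
  rw [Real.div_rpow hT (by positivity), Real.rpow_pow_comm zero_le_two]

lemma sqrt_le_sqrt_two_pow {x : ℝ} {k : ℕ} (hx : x ≤ 2 ^ k) : √x ≤ √2 ^ k := by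
  rwa [Real.sqrt_le_left (by positivity), ← pow_mul, mul_comm, pow_mul,
    Real.sq_sqrt zero_le_two]

lemma sqrt_nat_mul_rpow_div_two_pow_le (hT : 0 ≤ T) (hβ : 1 / 2 < β) (n : ℕ) :
    √n * (T / 2 ^ n) ^ β ≤ T ^ β := by
  have hn : √n ≤ ((2 : ℝ) ^ β) ^ n :=
    (sqrt_le_sqrt_two_pow (by exact_mod_cast n.lt_two_pow_self.le)).trans
      (pow_le_pow_left₀ (Real.sqrt_nonneg 2) (sqrt_two_lt_two_rpow hβ).le n)
  rw [rpow_div_two_pow hT, mul_div_assoc', div_le_iff₀ (by positivity), mul_comm]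
  gcongr

lemma sqrt_two_pow_add_one_mul_rpow_le (hT : 0 ≤ T) (β : ℝ) (k : ℕ) :
    √((2 ^ k + 1 : ℕ) : ℝ) * (T / 2 ^ k) ^ β ≤ √2 * T ^ β * (√2 / (2 : ℝ) ^ β) ^ k := by
  have hcard : √((2 ^ k + 1 : ℕ) : ℝ) ≤ √2 ^ (k + 1) := by
    refine sqrt_le_sqrt_two_pow ?_
    push_cast
    rw [pow_succ]
    linarith [one_le_pow₀ (M₀ := ℝ) one_le_two (n := k)]
  calc √((2 ^ k + 1 : ℕ) : ℝ) * (T / 2 ^ k) ^ β ≤ √2 ^ (k + 1) * (T / 2 ^ k) ^ β := by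
        gcongr
    _ = √2 * T ^ β * (√2 / (2 : ℝ) ^ β) ^ k := by
        rw [rpow_div_two_pow hT, div_pow, pow_succ]
        ring

end ChainingScales

namespace IsDesign

variable {N n : ℕ} {p : Finset ℕ → ℝ}

lemma sqrt_mul_dExp_sup'_abs_le (hd : IsDesign N n p) {ι : Type*} {A : Finset ι}
    (hA : A.Nonempty) (D : ι → Finset ℕ → ℝ) {c B : ℝ} (hc : 0 ≤ c)
    (hB : ∀ j ∈ A, c * dExp N p (fun s => D j s ^ 2) ≤ B) :
    √c * dExp N p (fun s => A.sup' hA fun j => |D j s|) ≤ √(#A * B) := by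
  have hmax : ∀ s, (A.sup' hA fun j => |D j s|) ≤ |√(∑ j ∈ A, D j s ^ 2)| := fun s => by
    rw [abs_of_nonneg (Real.sqrt_nonneg _), sup'_le_iff]
    intro j hj
    rw [← Real.sqrt_sq_eq_abs]
    exact Real.sqrt_le_sqrt (single_le_sum (fun i _ => sq_nonneg (D i s)) hj)
  have hsum : c * dExp N p (fun s => √(∑ j ∈ A, D j s ^ 2) ^ 2) ≤ #A * B := by
    simp only [Real.sq_sqrt (sum_nonneg fun j _ => sq_nonneg _), dExp_sum, mul_sum]
    simpa using sum_le_sum hB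
  exact (mul_le_mul_of_nonneg_left (hd.dExp_mono fun s _ => hmax s) (Real.sqrt_nonneg c)).trans
    (hd.sqrt_mul_dExp_abs_le hc hsum)

variable {T β V : ℝ} {Z : Finset ℕ → ℝ → ℝ}

lemma sqrt_mul_dExp_dyadicLinkMax_le (hd : IsDesign N n p) (hT : 0 < T) (hβ : 1 / 2 < β)
    (hV : 0 ≤ V)
    (hL2 : ∀ u ∈ Set.Icc 0 T, ∀ v ∈ Set.Icc 0 T,
      (n : ℝ) * dExp N p (fun s => (Z s u - Z s v) ^ 2) ≤ V * |u - v| ^ (2 * β))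
    (m : ℕ) :
    √n * dExp N p (fun s => dyadicLinkMax T (Z s) m)
      ≤ √V * (√2 * T ^ β * (√2 / (2 : ℝ) ^ β) ^ m) := by
  have hr : √2 / (2 : ℝ) ^ β ≤ 1 :=
    (div_le_one (by positivity)).mpr (sqrt_two_lt_two_rpow hβ).le
  have hlink : ∀ j ∈ range (2 ^ (m + 1) + 1), (n : ℝ) * dExp N p
      (fun s => (Z s (gridPt T (m + 1) j) - Z s (gridPt T m (j / 2))) ^ 2)
        ≤ V * (T / 2 ^ (m + 1)) ^ (2 * β) := by
    intro j hj
    have hj' : j ≤ 2 ^ (m + 1) := mem_range_succ_iff.mp hj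
    refine (hL2 _ (gridPt_mem hT hj') _ (gridPt_mem hT (by omega))).trans ?_
    gcongr
    exact abs_gridPt_succ_sub_gridPt_div_two_le hT m j
  refine (hd.sqrt_mul_dExp_sup'_abs_le _ _ n.cast_nonneg hlink).trans ?_
  rw [card_range, mul_left_comm, Real.sqrt_mul hV, Real.sqrt_mul (Nat.cast_nonneg _),
    sqrt_rpow_two_mul (by positivity)]
  refine mul_le_mul_of_nonneg_left ?_ (Real.sqrt_nonneg V)
  refine (sqrt_two_pow_add_one_mul_rpow_le hT.le β (m + 1)).trans ?_
  exact mul_le_mul_of_nonneg_left (pow_le_pow_of_le_one (by positivity) hr m.le_succ)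
    (by positivity)

theorem exists_chaining_majorant (hd : IsDesign N n p) (hT : 0 < T) (hβ : 1 / 2 < β) {K : ℝ}
    (hK : 0 ≤ K) (hV : 0 ≤ V)
    (hdet : ∀ s ∈ (range N).powerset, ∀ u ∈ Set.Icc 0 T, ∀ v ∈ Set.Icc 0 T,
      |Z s u - Z s v| ≤ K * |u - v| ^ β)
    (hL2 : ∀ u ∈ Set.Icc 0 T, ∀ v ∈ Set.Icc 0 T,
      (n : ℝ) * dExp N p (fun s => (Z s u - Z s v) ^ 2) ≤ V * |u - v| ^ (2 * β)) :
    ∃ G : Finset ℕ → ℝ, (∀ s ∈ (range N).powerset, ∀ t ∈ Set.Icc 0 T, |Z s t - Z s 0| ≤ G s) ∧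
      √n * dExp N p G ≤ (K + √V * (1 + √2 / (1 - √2 / (2 : ℝ) ^ β))) * T ^ β := by
  set r := √2 / (2 : ℝ) ^ β
  have hr0 : 0 ≤ r := by positivity
  have hr1 : r < 1 := (div_lt_one (by positivity)).mpr (sqrt_two_lt_two_rpow hβ)
  refine ⟨fun s => K * (T / 2 ^ n) ^ β + ∑ m ∈ range n, dyadicLinkMax T (Z s) m
    + |Z s T - Z s 0|, fun s hs t ht => ?_, ?_⟩
  · refine (abs_sub_le_dyadic_chain hT (Z s) ht n).trans
      (add_le_add (add_le_add ?_ le_rfl) le_rfl)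
    refine (hdet s hs t ht _ (gridPt_mem hT (gridIdx_le hT ht))).trans ?_
    gcongr
    exact abs_sub_gridPt_gridIdx_le hT ht
  have hfine : √n * (K * (T / 2 ^ n) ^ β) ≤ K * T ^ β := by
    rw [mul_left_comm]
    exact mul_le_mul_of_nonneg_left (sqrt_nat_mul_rpow_div_two_pow_le hT.le hβ n) hK
  have hlinks : √n * ∑ m ∈ range n, dExp N p (fun s => dyadicLinkMax T (Z s) m)
      ≤ √V * (√2 * T ^ β) * (1 / (1 - r)) := by
    have hgeom : ∑ m ∈ range n, r ^ m ≤ 1 / (1 - r) := by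
      have := geom_sum_Ico_le_of_lt_one hr0 hr1 (m := 0) (n := n)
      rwa [← range_eq_Ico, pow_zero] at this
    calc √n * ∑ m ∈ range n, dExp N p (fun s => dyadicLinkMax T (Z s) m)
        ≤ ∑ m ∈ range n, √V * (√2 * T ^ β) * r ^ m := by
          rw [mul_sum]
          refine sum_le_sum fun m _ => ?_
          simpa only [mul_assoc] using hd.sqrt_mul_dExp_dyadicLinkMax_le hT hβ hV hL2 m
      _ ≤ √V * (√2 * T ^ β) * (1 / (1 - r)) := by rw [← mul_sum]; gcongr
  have hends : √n * dExp N p (fun s => |Z s T - Z s 0|) ≤ √V * T ^ β := by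
    have := hd.sqrt_mul_dExp_abs_le n.cast_nonneg (hL2 T ⟨hT.le, le_rfl⟩ 0 ⟨le_rfl, hT.le⟩)
    rwa [sub_zero, abs_of_pos hT, Real.sqrt_mul hV, sqrt_rpow_two_mul hT.le] at this
  rw [dExp_add, dExp_add, hd.dExp_const, dExp_sum, mul_add, mul_add]
  exact (add_le_add (add_le_add hfine hlinks) hends).trans_eq (by ring)

lemma dExp_mul_iSup_iSup_abs_sub_le (hd : IsDesign N n p) (hT : 0 ≤ T) {c : ℝ} (hc : 0 ≤ c)
    {G : Finset ℕ → ℝ}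
    (hG : ∀ s ∈ (range N).powerset, ∀ t ∈ Set.Icc 0 T, |Z s t - Z s 0| ≤ G s) :
    dExp N p (fun s => c * ⨆ u : Set.Icc 0 T, ⨆ v : Set.Icc 0 T, |Z s v - Z s u|)
      ≤ 2 * (c * dExp N p G) := by
  rw [← dExp_const_mul, ← dExp_const_mul]
  refine hd.dExp_mono fun s hs => ?_
  have hG2 : 0 ≤ 2 * G s := by linarith [(abs_nonneg _).trans (hG s hs 0 ⟨le_rfl, hT⟩)]
  rw [mul_left_comm]
  refine mul_le_mul_of_nonneg_left
    (Real.iSup_le (fun u => Real.iSup_le (fun v => ?_) hG2) hG2) hc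
  linarith [abs_sub_le (Z s v) (Z s 0) (Z s u), abs_sub_comm (Z s 0) (Z s u), hG s hs u u.2,
    hG s hs v v.2]

lemma dExp_iSup_abs_le (hd : IsDesign N n p) (hT : 0 ≤ T) {G : Finset ℕ → ℝ}
    (hG : ∀ s ∈ (range N).powerset, ∀ t ∈ Set.Icc 0 T, |Z s t - Z s 0| ≤ G s) :
    dExp N p (fun s => ⨆ t : Set.Icc 0 T, |Z s t|)
      ≤ dExp N p G + dExp N p (fun s => |Z s 0|) := by
  rw [← dExp_add]
  refine hd.dExp_mono fun s hs => Real.iSup_le (fun t => ?_) ?_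
  · linarith [abs_sub_abs_le_abs_sub (Z s t) (Z s 0), hG s hs t t.2]
  · linarith [(abs_nonneg _).trans (hG s hs 0 ⟨le_rfl, hT⟩), abs_nonneg (Z s 0)]

variable {Y : ℕ → ℝ → ℝ} {lam C₁ : ℝ}

lemma sqrt_mul_dExp_abs_htMean_sub_popMean_le (hd : IsDesign N n p) (hlam : 0 < lam)
    (hπ : ∀ k ∈ range N, lam ≤ pi1 N p k) (hC₁ : 0 ≤ C₁)
    (hΔ : ∀ k ∈ range N, ∀ l ∈ range N, k ≠ l → (n : ℝ) * |Delta N p k l| ≤ C₁)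
    {t C₂ : ℝ} (hY : (N : ℝ)⁻¹ * ∑ k ∈ range N, Y k t ^ 2 ≤ C₂) :
    √n * dExp N p (fun s => |htMean N p Y s t - popMean N Y t|)
      ≤ √((1 + C₁) / lam ^ 2 * C₂) := by
  have hπ0 : ∀ k ∈ range N, pi1 N p k ≠ 0 := fun k hk => (hlam.trans_le (hπ k hk)).ne'
  refine hd.sqrt_mul_dExp_abs_le n.cast_nonneg ?_
  calc (n : ℝ) * dExp N p (fun s => (htMean N p Y s t - popMean N Y t) ^ 2)
      = (n : ℝ) * dExp N p (fun s => htError N p (fun k => Y k t) s ^ 2) := by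
        rw [dExp_congr fun s hs => by rw [htMean_sub_popMean hπ0 Y (mem_powerset.mp hs)]]
    _ ≤ (1 + C₁) / lam ^ 2 * ((N : ℝ)⁻¹ * ∑ k ∈ range N, Y k t ^ 2) :=
        hd.mul_dExp_htError_sq_le hlam hπ hC₁ hΔ _
    _ ≤ (1 + C₁) / lam ^ 2 * C₂ :=
        mul_le_mul_of_nonneg_left hY (div_nonneg (by linarith) (sq_nonneg lam))

theorem exists_htMean_chaining_majorant (hd : IsDesign N n p) {C₃ : ℝ} (hT : 0 < T)
    (hlam : 0 < lam) (hπ : ∀ k ∈ range N, lam ≤ pi1 N p k) (hC₁ : 0 ≤ C₁)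
    (hΔ : ∀ k ∈ range N, ∀ l ∈ range N, k ≠ l → (n : ℝ) * |Delta N p k l| ≤ C₁)
    (hβ : 1 / 2 < β) (hC₃ : 0 ≤ C₃)
    (hY : ∀ u ∈ Set.Icc (0 : ℝ) T, ∀ v ∈ Set.Icc (0 : ℝ) T,
      (N : ℝ)⁻¹ * ∑ k ∈ range N, (Y k v - Y k u) ^ 2 ≤ C₃ * |v - u| ^ (2 * β)) :
    ∃ G : Finset ℕ → ℝ, (∀ s ∈ (range N).powerset, ∀ t ∈ Set.Icc 0 T,
        |htMean N p Y s t - popMean N Y t - (htMean N p Y s 0 - popMean N Y 0)| ≤ G s) ∧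
      √n * dExp N p G ≤ (lam⁻¹ * √C₃
        + √((1 + C₁) / lam ^ 2 * C₃) * (1 + √2 / (1 - √2 / (2 : ℝ) ^ β))) * T ^ β := by
  have hπ0 : ∀ k ∈ range N, pi1 N p k ≠ 0 := fun k hk => (hlam.trans_le (hπ k hk)).ne'
  have hinc : ∀ s ∈ (range N).powerset, ∀ u v : ℝ,
      htMean N p Y s u - popMean N Y u - (htMean N p Y s v - popMean N Y v)
        = htError N p (fun k => Y k u - Y k v) s := fun s hs u v => by
    rw [htMean_sub_popMean hπ0 Y (mem_powerset.mp hs), htMean_sub_popMean hπ0 Y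
      (mem_powerset.mp hs), htError_sub]
  refine hd.exists_chaining_majorant hT hβ (by positivity) (by positivity)
    (fun s hs u hu v hv => ?_) (fun u hu v hv => ?_)
  · rw [hinc s hs, mul_assoc, ← sqrt_rpow_two_mul (abs_nonneg (u - v)), ← Real.sqrt_mul hC₃]
    exact (hd.abs_htError_le hlam hπ _ s).trans
      (mul_le_mul_of_nonneg_left (Real.sqrt_le_sqrt (hY v hv u hu)) (by positivity))
  · rw [dExp_congr fun s hs => by rw [hinc s hs], mul_assoc]
    exact (hd.mul_dExp_htError_sq_le hlam hπ hC₁ hΔ _).trans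
      (mul_le_mul_of_nonneg_left (hY v hv u hu) (div_nonneg (by linarith) (sq_nonneg lam)))

end IsDesign

theorem sup_increment_moment_bound_general
    (T lam C₁ C₂ C₃ β : ℝ)
    (Y : ℕ → ℝ → ℝ) (nseq : ℕ → ℕ) (p : ℕ → Finset ℕ → ℝ)
    (hT : 0 < T)
    (hdes : ∀ N, IsDesign N (nseq N) (p N))
    -- Assumption 2
    (hlam : 0 < lam)
    (hA2a : ∀ N, ∀ k ∈ Finset.range N, lam ≤ pi1 N (p N) k)
    (hC₁ : 0 < C₁)
    (hA2c : ∀ N, ∀ k ∈ Finset.range N, ∀ l ∈ Finset.range N, k ≠ l →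
      (nseq N : ℝ) * |Delta N (p N) k l| ≤ C₁)
    -- Assumption 4
    (hβ : 1 / 2 < β) (hC₃ : 0 < C₃)
    (hA4a : ∀ N : ℕ, (N : ℝ)⁻¹ * ∑ k ∈ Finset.range N, Y k 0 ^ 2 < C₂)
    (hA4b : ∀ N : ℕ, ∀ s ∈ Set.Icc (0 : ℝ) T, ∀ t ∈ Set.Icc (0 : ℝ) T,
      (N : ℝ)⁻¹ * ∑ k ∈ Finset.range N, (Y k t - Y k s) ^ 2 ≤ C₃ * |t - s| ^ (2 * β))
    :
    (∃ C₈ : ℝ, 0 < C₈ ∧ ∀ N,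
        dExp N (p N) (fun sam => Real.sqrt (nseq N) *
          ⨆ s : Set.Icc (0 : ℝ) T, ⨆ t : Set.Icc (0 : ℝ) T,
            |htMean N (p N) Y sam t - popMean N Y t
              - htMean N (p N) Y sam s + popMean N Y s|) ≤ C₈) ∧
    ∃ C : ℝ, 0 < C ∧ ∀ N,
      Real.sqrt (nseq N) * dExp N (p N) (fun sam =>
          ⨆ t : Set.Icc (0 : ℝ) T, |htMean N (p N) Y sam t - popMean N Y t|) ≤ C := by
  set B := (lam⁻¹ * √C₃
    + √((1 + C₁) / lam ^ 2 * C₃) * (1 + √2 / (1 - √2 / (2 : ℝ) ^ β))) * T ^ β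
  have hmaj := fun N => (hdes N).exists_htMean_chaining_majorant hT hlam (hA2a N) hC₁.le
    (hA2c N) hβ hC₃.le (hA4b N)
  have hstart := fun N => (hdes N).sqrt_mul_dExp_abs_htMean_sub_popMean_le hlam (hA2a N) hC₁.le
    (hA2c N) (hA4a N).le
  refine ⟨⟨max (2 * B) 1, by positivity, fun N => ?_⟩,
    max (B + √((1 + C₁) / lam ^ 2 * C₂)) 1, by positivity, fun N => ?_⟩ <;>
    obtain ⟨G, hG, hGB⟩ := hmaj N
  · simp only [sub_add]
    refine ((hdes N).dExp_mul_iSup_iSup_abs_sub_le hT.le (Real.sqrt_nonneg _) hG).trans ?_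
    exact le_max_of_le_left (by linarith)
  · refine (mul_le_mul_of_nonneg_left ((hdes N).dExp_iSup_abs_le hT.le hG)
      (Real.sqrt_nonneg _)).trans (le_max_of_le_left ?_)
    linarith [hstart N]

/-- under Assumptions 1–4 there is a constant `C₈` bounding, uniformly in `N`,
`E[√n · sup_{(s,t)} |μ̂_N(t) - μ_N(t) - μ̂_N(s) + μ_N(s)|]`; consequently
`√n · E[sup_t |μ̂_N(t) - μ_N(t)|]` is bounded uniformly in `N`. -/
theorem sup_increment_moment_bound
    (T πlim lam lamstar C₁ C₂ C₃ β : ℝ) (μ : ℝ → ℝ)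
    (Y : ℕ → ℝ → ℝ) (nseq : ℕ → ℕ) (p : ℕ → Finset ℕ → ℝ)
    (hT : 0 < T)
    (hdes : ∀ N, IsDesign N (nseq N) (p N))
    -- Assumption 1
    (hA1 : Tendsto (fun N => (nseq N : ℝ) / (N : ℝ)) atTop (𝓝 πlim))
    (hπ0 : 0 < πlim) (hπ1 : πlim < 1)
    -- Assumption 2
    (hlam : 0 < lam)
    (hA2a : ∀ N, ∀ k ∈ Finset.range N, lam ≤ pi1 N (p N) k)
    (hlamstar : 0 < lamstar)
    (hA2b : ∀ N, ∀ k ∈ Finset.range N, ∀ l ∈ Finset.range N, k ≠ l →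
      lamstar ≤ pi2 N (p N) k l)
    (hC₁ : 0 < C₁)
    (hA2c : ∀ N, ∀ k ∈ Finset.range N, ∀ l ∈ Finset.range N, k ≠ l →
      (nseq N : ℝ) * |Delta N (p N) k l| ≤ C₁)
    -- Assumption 3
    (hA3a : ∀ k, ContinuousOn (Y k) (Set.Icc 0 T))
    (hA3b : ContinuousOn μ (Set.Icc 0 T))
    (hA3c : TendstoUniformlyOn (fun N t => popMean N Y t) μ atTop (Set.Icc 0 T))
    -- Assumption 4
    (hβ : 1 / 2 < β) (hC₂ : 0 < C₂) (hC₃ : 0 < C₃)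
    (hA4a : ∀ N : ℕ, (N : ℝ)⁻¹ * ∑ k ∈ Finset.range N, Y k 0 ^ 2 < C₂)
    (hA4b : ∀ N : ℕ, ∀ s ∈ Set.Icc (0 : ℝ) T, ∀ t ∈ Set.Icc (0 : ℝ) T,
      (N : ℝ)⁻¹ * ∑ k ∈ Finset.range N, (Y k t - Y k s) ^ 2 ≤ C₃ * |t - s| ^ (2 * β))
    :
    (∃ C₈ : ℝ, 0 < C₈ ∧ ∀ N,
        dExp N (p N) (fun sam => Real.sqrt (nseq N) *
          ⨆ s : Set.Icc (0 : ℝ) T, ⨆ t : Set.Icc (0 : ℝ) T,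
            |htMean N (p N) Y sam t - popMean N Y t
              - htMean N (p N) Y sam s + popMean N Y s|) ≤ C₈) ∧
    ∃ C : ℝ, 0 < C ∧ ∀ N,
      Real.sqrt (nseq N) * dExp N (p N) (fun sam =>
          ⨆ t : Set.Icc (0 : ℝ) T, |htMean N (p N) Y sam t - popMean N Y t|) ≤ C :=
  sup_increment_moment_bound_general T lam C₁ C₂ C₃ β Y nseq p hT hdes hlam hA2a hC₁ hA2c hβ hC₃
    hA4a hA4b

end
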